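/- arXiv:0908.2132 — 5 statements merged into one kernel-verified Lean document; each statement's English description precedes it below -/
import Mathlib

section
/- Let S ⊆ ℝⁿ be a regular k-simplex and η: ℝⁿ → ℝᵐ an affine map with integer coefficients (η(x) = Mx + b with M an integer matrix and b an integer vector) that restricts to a bijection of S onto a k-simplex S' ⊆ ℝᵐ whose inverse is also the restriction of an affine map with integer coefficients. Then S' is a regular k-simplex. -/
open scoped BigOperators

/-- The least common denominator of a rational point `v ∈ ℚⁿ`. -/
def den {n : ℕ} (v : Fin n → ℚ) : ℕ :=
  Finset.univ.lcm fun i => (v i).den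

/-- The homogeneous correspondent `ṽ = den(v)·(v,1) ∈ ℤ^{n+1}` of a rational point `v`. -/
def homc {n : ℕ} (v : Fin n → ℚ) : Fin (n + 1) → ℤ :=
  fun j => if h : (j : ℕ) < n then ((den v : ℚ) * v ⟨j, h⟩).num else (den v : ℤ)

/-- A finite family of rational points in `ℚⁿ` is regular if their homogeneous
correspondents form part of a basis of the free abelian group `ℤ^{n+1}`. -/
def IsRegularPts {ι : Type*} [Fintype ι] {n : ℕ} (v : ι → (Fin n → ℚ)) : Prop :=
  ∃ (b : Module.Basis (Fin (n + 1)) ℤ (Fin (n + 1) → ℤ)) (f : ι → Fin (n + 1)),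
    Function.Injective f ∧ ∀ i, b (f i) = homc (v i)

/-- The affine map `x ↦ Mx + b` with integer coefficients, on real points. -/
def affR {m n : ℕ} (M : Matrix (Fin m) (Fin n) ℤ) (b : Fin m → ℤ)
    (x : Fin n → ℝ) : Fin m → ℝ :=
  fun j => (∑ i, (M j i : ℝ) * x i) + (b j : ℝ)

/-- The affine map `x ↦ Mx + b` with integer coefficients, on rational points. -/
def affQ {m n : ℕ} (M : Matrix (Fin m) (Fin n) ℤ) (b : Fin m → ℤ)
    (x : Fin n → ℚ) : Fin m → ℚ :=
  fun j => (∑ i, (M j i : ℚ) * x i) + (b j : ℚ)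

/-- A rational point of `ℚⁿ`, viewed in `ℝⁿ`. -/
def toR {n : ℕ} (q : Fin n → ℚ) : Fin n → ℝ := fun i => (q i : ℝ)

/-!
In homogeneous coordinates an integer affine map `x ↦ Mx + b` is the integer matrix
`[[M, b], [0, 1]]`, and it sends `ṽ` to the homogeneous correspondent of the image as long as it
does not change the least common denominator. Integer affine maps can only shrink denominators,
so one that is inverted by another integer affine map on the vertices preserves them. Thus the
homogeneous matrix of the inverse map sends the correspondents of the image vertices to members
of a basis of `ℤ^{n+1}`. The dual coordinates of those members split the span of the image
correspondents off as a direct summand of `ℤ^{m+1}`; its complement is free since `ℤ` is a PID,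
so a basis of the span extends to one of `ℤ^{m+1}`.
-/

open Module Matrix

section PartOfBasis

variable {R M N ι ι' κ : Type*}

theorem Module.Basis.exists_extend_of_isCompl [Ring R] [InvariantBasisNumber R]
    [AddCommGroup M] [Module R M] (B : Basis ι R M) {w : κ → M} (hw : LinearIndependent R w)
    {q : Submodule R M} (hq : IsCompl (Submodule.span R (Set.range w)) q) [Module.Free R q] :
    ∃ (B' : Basis ι R M) (g : κ → ι), Function.Injective g ∧ ∀ i, B' (g i) = w i := by
  let B₀ := ((Basis.span hw).prod (Free.chooseBasis R q)).map
    (Submodule.prodEquivOfIsCompl _ _ hq)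
  let e := B₀.indexEquiv B
  refine ⟨B₀.reindex e, e ∘ Sum.inl, e.injective.comp Sum.inl_injective, fun i => ?_⟩
  simp [B₀, Basis.prod_apply, Basis.span_apply]

theorem Module.Basis.exists_extend_of_map_eq_basis [Fintype κ] [CommRing R] [IsDomain R]
    [IsPrincipalIdealRing R] [AddCommGroup M] [Module R M] [Module.Finite R M] [AddCommGroup N]
    [Module R N]
    (B : Basis ι R M) (b : Basis ι' R N) {f : κ → ι'} (hf : Function.Injective f) {w : κ → M}
    (ψ : M →ₗ[R] N) (hψ : ∀ i, ψ (w i) = b (f i)) :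
    ∃ (B' : Basis ι R M) (g : κ → ι), Function.Injective g ∧ ∀ i, B' (g i) = w i := by
  classical
  let p : M →ₗ[R] κ → R := LinearMap.pi fun i => b.coord (f i) ∘ₗ ψ
  have hpw : ∀ i, p (w i) = Pi.single i 1 := fun i => by
    ext j
    simp [p, hψ, Finsupp.single_apply, Pi.single_apply, hf.eq_iff, eq_comm]
  let u := Fintype.linearCombination R w
  have hpu : ∀ c, p (u c) = c := fun c => by
    simp [u, Fintype.linearCombination_apply, hpw, ← pi_eq_sum_univ']
  have hw : LinearIndependent R w :=
    linearIndependent_iff_injective_fintypeLinearCombination.2 (Function.LeftInverse.injective hpu)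
  have hproj : LinearMap.IsProj (Submodule.span R (Set.range w)) (u ∘ₗ p) := by
    rw [← Fintype.range_linearCombination]
    refine ⟨fun x => LinearMap.mem_range_self u (p x), ?_⟩
    rintro _ ⟨c, rfl⟩
    rw [LinearMap.comp_apply, hpu]
  have : Module.Free R M := Free.of_basis B
  exact B.exists_extend_of_isCompl hw hproj.isCompl

end PartOfBasis

namespace Matrix

variable {R : Type*} {m n : ℕ}

/-- The matrix `[[A, c], [0, 1]]` of the affine map `x ↦ A x + c` in homogeneous coordinates. -/
def homogenize [Zero R] [One R] (A : Matrix (Fin m) (Fin n) R) (c : Fin m → R) :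
    Matrix (Fin (m + 1)) (Fin (n + 1)) R :=
  of (Fin.snoc (fun j => Fin.snoc (A j) (c j)) (Fin.snoc 0 1))

theorem homogenize_mulVec_snoc [CommSemiring R] (A : Matrix (Fin m) (Fin n) R) (c : Fin m → R)
    (x : Fin n → R) (t : R) :
    A.homogenize c *ᵥ Fin.snoc x t = Fin.snoc (A *ᵥ x + t • c) t := by
  ext j
  induction j using Fin.lastCases with
  | last => simp [homogenize, mulVec, dotProduct, Fin.sum_univ_castSucc]
  | cast j => simp [homogenize, mulVec, dotProduct, Fin.sum_univ_castSucc, mul_comm]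

theorem homogenize_map {S : Type*} [Semiring R] [Semiring S] (f : R →+* S)
    (A : Matrix (Fin m) (Fin n) R) (c : Fin m → R) :
    (A.homogenize c).map f = (A.map f).homogenize (f ∘ c) := by
  ext j i
  induction j using Fin.lastCases <;> induction i using Fin.lastCases <;> simp [homogenize]

end Matrix

theorem Rat.den_mul_eq_one_of_den_dvd {q : ℚ} {D : ℕ} (h : q.den ∣ D) :
    ((D : ℚ) * q).den = 1 := by
  obtain ⟨c, rfl⟩ := h
  rw [Nat.cast_mul, mul_comm (q.den : ℚ), mul_assoc, Rat.den_mul_eq_num]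
  exact_mod_cast Rat.den_intCast (c * q.num)

section Homogeneous

variable {m n : ℕ}

theorem den_apply_dvd (x : Fin n → ℚ) (i : Fin n) : (x i).den ∣ den x :=
  Finset.dvd_lcm (Finset.mem_univ i)

theorem den_affQ_dvd (M : Matrix (Fin m) (Fin n) ℤ) (b : Fin m → ℤ) (x : Fin n → ℚ) :
    den (affQ M b x) ∣ den x := by
  refine Finset.lcm_dvd fun j _ => ?_
  rw [affQ, Rat.add_intCast_den]
  refine (Finset.Rat.den_sum_dvd_lcm_den _ _).trans (Finset.lcm_dvd fun i _ => ?_)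
  simpa using (Rat.mul_den_dvd (M j i) (x i)).trans (by simpa using den_apply_dvd x i)

theorem intCast_comp_homc (x : Fin n → ℚ) :
    Int.cast ∘ homc x = Fin.snoc ((den x : ℚ) • x) (den x : ℚ) := by
  ext j
  induction j using Fin.lastCases with
  | last => simp [homc]
  | cast i =>
    simp only [Function.comp_apply, homc, Fin.val_castSucc, i.isLt, dif_pos, Fin.snoc_castSucc]
    exact (Rat.den_eq_one_iff _).1 (Rat.den_mul_eq_one_of_den_dvd (den_apply_dvd x i))

theorem affQ_eq_mulVec_add (M : Matrix (Fin m) (Fin n) ℤ) (b : Fin m → ℤ) (x : Fin n → ℚ) :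
    affQ M b x = M.map (↑) *ᵥ x + Int.cast ∘ b := by
  ext j
  simp [affQ, mulVec, dotProduct]

theorem homogenize_mulVec_homc (M : Matrix (Fin m) (Fin n) ℤ) (b : Fin m → ℤ) (x : Fin n → ℚ)
    (h : den (affQ M b x) = den x) :
    M.homogenize b *ᵥ homc x = homc (affQ M b x) := by
  refine (Int.cast_injective (α := ℚ)).comp_left ?_
  ext j
  have hlhs := (Int.castRingHom ℚ).map_mulVec (M.homogenize b) (homc x) j
  rw [homogenize_map] at hlhs
  simp only [Int.coe_castRingHom, intCast_comp_homc, homogenize_mulVec_snoc] at hlhs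
  have hrhs := congrFun (intCast_comp_homc (affQ M b x)) j
  dsimp only [Function.comp_apply] at hrhs ⊢
  rw [hlhs, hrhs, h, affQ_eq_mulVec_add]
  simp [mulVec_smul, smul_add]

end Homogeneous

section RealPoints

variable {m n : ℕ}

theorem toR_injective : Function.Injective (toR (n := n)) :=
  fun _ _ h => funext fun i => Rat.cast_injective (congrFun h i)

theorem affR_toR (M : Matrix (Fin m) (Fin n) ℤ) (b : Fin m → ℤ) (x : Fin n → ℚ) :
    affR M b (toR x) = toR (affQ M b x) := by
  ext j
  simp [affR, affQ, toR]

end RealPoints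

theorem image_of_regular_simplex_regular_general {n m k : ℕ}
    (v : Fin (k + 1) → (Fin n → ℚ)) (hreg : IsRegularPts v)
    (M : Matrix (Fin m) (Fin n) ℤ) (b : Fin m → ℤ)
    (M' : Matrix (Fin n) (Fin m) ℤ) (b' : Fin n → ℤ)
    (hinv : ∀ x ∈ convexHull ℝ (Set.range fun i => toR (v i)),
      affR M' b' (affR M b x) = x) :
    IsRegularPts (fun i => affQ M b (v i)) := by
  obtain ⟨B, f, hf, hB⟩ := hreg
  have hback : ∀ i, affQ M' b' (affQ M b (v i)) = v i := fun i => toR_injective <| by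
    simpa only [affR_toR] using hinv _ (subset_convexHull ℝ _ ⟨i, rfl⟩)
  have hden : ∀ i, den (affQ M' b' (affQ M b (v i))) = den (affQ M b (v i)) := fun i =>
    Nat.dvd_antisymm (den_affQ_dvd M' b' _) (by simpa only [hback] using den_affQ_dvd M b (v i))
  refine (Pi.basisFun ℤ _).exists_extend_of_map_eq_basis B hf (M'.homogenize b').mulVecLin
    fun i => ?_
  rw [mulVecLin_apply, homogenize_mulVec_homc M' b' _ (hden i), hback, hB]

/-- If `S ⊆ ℝⁿ` is a regular `k`-simplex and `η(x) = Mx + b` is an affine map with integer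
coefficients which restricts to a bijection of `S` onto a `k`-simplex `S' ⊆ ℝᵐ` whose
inverse is also the restriction of an affine map with integer coefficients, then `S'`
(the simplex on the image vertices) is regular. -/
theorem image_of_regular_simplex_regular {n m k : ℕ}
    (v : Fin (k + 1) → (Fin n → ℚ)) (hreg : IsRegularPts v)
    (M : Matrix (Fin m) (Fin n) ℤ) (b : Fin m → ℤ)
    (M' : Matrix (Fin n) (Fin m) ℤ) (b' : Fin n → ℤ)
    (hinv : ∀ x ∈ convexHull ℝ (Set.range fun i => toR (v i)),
      affR M' b' (affR M b x) = x)
    (hind : AffineIndependent ℚ fun i => affQ M b (v i)) :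
    IsRegularPts (fun i => affQ M b (v i)) :=
  image_of_regular_simplex_regular_general v hreg M b M' b' hinv
end

section
/- Let T = conv(v₀,…,v_k) ⊆ ℝᵐ and U = conv(w₀,…,w_k) ⊆ ℝⁿ be regular k-simplexes with den(vᵢ) = den(wᵢ) for all i = 0,…,k. Then there exists exactly one map η: T → U which is the restriction of an affine map with integer coefficients, is a bijection onto U whose inverse is also the restriction of an affine map with integer coefficients, and satisfies η(vᵢ) = wᵢ for all i. -/
open scoped BigOperators

/-!
A ℤ-linear map `A : ℤ^{m+1} → ℤ^{n+1}` sending each homogeneous correspondent `ṽᵢ` to `w̃ᵢ`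
dehomogenizes to an integer affine map `ℝᵐ → ℝⁿ` sending `vᵢ` to `wᵢ`, because
`den vᵢ = den wᵢ` is the common last coordinate of `ṽᵢ` and `w̃ᵢ`. Regularity of the `vᵢ` provides
such an `A`, and regularity of the `wᵢ` one in the opposite direction. Affine maps that agree on
the vertices of a simplex agree on all of it, which gives the inverse and the uniqueness.
-/

open Matrix

lemma den_ne_zero {m : ℕ} (q : Fin m → ℚ) : den q ≠ 0 := by
  simp only [den, ne_eq, Finset.lcm_eq_zero_iff, Finset.mem_univ, true_and, not_exists]
  exact fun i => (q i).den_nz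

lemma den_dvd_den {m : ℕ} (q : Fin m → ℚ) (i : Fin m) : (q i).den ∣ den q :=
  Finset.dvd_lcm (Finset.mem_univ i)

lemma Rat.num_natCast_mul_of_den_dvd {a : ℚ} {d : ℕ} (h : a.den ∣ d) :
    (((d : ℚ) * a).num : ℚ) = d * a := by
  obtain ⟨c, rfl⟩ := h
  have hint : ((a.den * c : ℕ) : ℚ) * a = ((a.num * c : ℤ) : ℚ) := by
    push_cast
    rw [← Rat.den_mul_eq_num]
    ring
  rw [hint, Rat.num_intCast]

lemma homc_castSucc {m : ℕ} (q : Fin m → ℚ) (i : Fin m) :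
    (homc q i.castSucc : ℝ) = den q * (q i : ℝ) := by
  have hq : (homc q i.castSucc : ℚ) = den q * q i := by
    simpa [homc] using Rat.num_natCast_mul_of_den_dvd (den_dvd_den q i)
  exact_mod_cast congrArg (Rat.cast : ℚ → ℝ) hq

lemma homc_last {m : ℕ} (q : Fin m → ℚ) : homc q (Fin.last m) = den q := by
  simp [homc]

section Dehomogenization

variable {m n : ℕ} (A : Matrix (Fin (n + 1)) (Fin (m + 1)) ℤ)

/-- The affine map `ℝᵐ → ℝⁿ` that `A` induces on the charts of last coordinate `1`. -/
noncomputable def dehom : (Fin m → ℝ) → (Fin n → ℝ) :=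
  affR (A.submatrix Fin.castSucc Fin.castSucc) fun j => A j.castSucc (Fin.last m)

lemma den_mul_dehom_toR (q : Fin m → ℚ) (j : Fin n) :
    den q * dehom A (toR q) j = ((A *ᵥ homc q) j.castSucc : ℝ) := by
  simp only [dehom, affR, toR, Matrix.mulVec, dotProduct, Matrix.submatrix_apply,
    Fin.sum_univ_castSucc, homc_last, Int.cast_add, Int.cast_sum, Int.cast_mul, homc_castSucc,
    Int.cast_natCast, mul_add, Finset.mul_sum]
  congr 1
  · exact Finset.sum_congr rfl fun _ _ => by ring
  · ring

lemma dehom_toR_of_mulVec_homc {q : Fin m → ℚ} {r : Fin n → ℚ}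
    (hA : A *ᵥ homc q = homc r) (hd : den q = den r) : dehom A (toR q) = toR r := by
  funext j
  have hj := den_mul_dehom_toR A q j
  rw [hA, homc_castSucc, hd] at hj
  exact mul_left_cancel₀ (by exact_mod_cast den_ne_zero r) hj

end Dehomogenization

lemma IsRegularPts.exists_mulVec_homc_eq {ι : Type*} [Fintype ι] {m : ℕ}
    {v : ι → Fin m → ℚ} (hv : IsRegularPts v) {n : ℕ} (y : ι → Fin (n + 1) → ℤ) :
    ∃ A : Matrix (Fin (n + 1)) (Fin (m + 1)) ℤ, ∀ i, A *ᵥ homc (v i) = y i := by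
  obtain ⟨b, f, hf, hbf⟩ := hv
  refine ⟨LinearMap.toMatrix' (b.constr ℤ (Function.extend f y 0)), fun i => ?_⟩
  rw [LinearMap.toMatrix'_mulVec, ← hbf i, Module.Basis.constr_basis, hf.extend_apply]

lemma IsRegularPts.exists_affR_apply_eq {ι : Type*} [Fintype ι] {m n : ℕ}
    {v : ι → Fin m → ℚ} (hv : IsRegularPts v) {w : ι → Fin n → ℚ}
    (hden : ∀ i, den (v i) = den (w i)) :
    ∃ M b, ∀ i, affR M b (toR (v i)) = toR (w i) := by
  obtain ⟨A, hA⟩ := hv.exists_mulVec_homc_eq fun i => homc (w i)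
  exact ⟨_, _, fun i => dehom_toR_of_mulVec_homc A (hA i) (hden i)⟩

noncomputable def affRAffineMap {m n : ℕ} (M : Matrix (Fin n) (Fin m) ℤ) (b : Fin n → ℤ) :
    (Fin m → ℝ) →ᵃ[ℝ] (Fin n → ℝ) where
  toFun := affR M b
  linear := Matrix.mulVecLin (M.map (Int.cast : ℤ → ℝ))
  map_vadd' p x := by
    funext j
    simp only [affR, Matrix.mulVecLin_apply, Matrix.mulVec, dotProduct, Matrix.map_apply,
      vadd_eq_add, Pi.add_apply, mul_add, Finset.sum_add_distrib]
    ring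

@[simp]
lemma coe_affRAffineMap {m n : ℕ} (M : Matrix (Fin n) (Fin m) ℤ) (b : Fin n → ℤ) :
    ⇑(affRAffineMap M b) = affR M b :=
  rfl

lemma AffineMap.eqOn_convexHull {𝕜 E F : Type*} [Ring 𝕜] [PartialOrder 𝕜]
    [AddCommGroup E] [Module 𝕜 E] [AddCommGroup F] [Module 𝕜 F] {f g : E →ᵃ[𝕜] F} {s : Set E}
    (h : s.EqOn f g) : (convexHull 𝕜 s).EqOn f g :=
  (AffineMap.eqOn_affineSpan h).mono (convexHull_subset_affineSpan s)

/-- Let `T = conv(v₀,…,v_k) ⊆ ℝᵐ` and `U = conv(w₀,…,w_k) ⊆ ℝⁿ` be regular `k`-simplexes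
with `den vᵢ = den wᵢ` for all `i`. Then there is exactly one map `η : T → U` which is the
restriction of an affine map with integer coefficients, maps `T` onto `U`, has an inverse
which is also the restriction of an affine map with integer coefficients, and satisfies
`η(vᵢ) = wᵢ` for all `i`. -/
theorem unique_Z_linear_map_of_regular_simplexes {m n k : ℕ}
    (v : Fin (k + 1) → (Fin m → ℚ)) (w : Fin (k + 1) → (Fin n → ℚ))
    (hv : IsRegularPts v) (hw : IsRegularPts w)
    (hden : ∀ i, den (v i) = den (w i)) :
    ∃ η : (Fin m → ℝ) → (Fin n → ℝ),
      (((∃ M b, ∀ x ∈ convexHull ℝ (Set.range fun i => toR (v i)), η x = affR M b x) ∧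
        η '' convexHull ℝ (Set.range fun i => toR (v i)) =
          convexHull ℝ (Set.range fun i => toR (w i)) ∧
        (∃ M' b', ∀ x ∈ convexHull ℝ (Set.range fun i => toR (v i)),
          affR M' b' (η x) = x) ∧
        ∀ i, η (toR (v i)) = toR (w i))) ∧
      ∀ η' : (Fin m → ℝ) → (Fin n → ℝ),
        (((∃ M b, ∀ x ∈ convexHull ℝ (Set.range fun i => toR (v i)), η' x = affR M b x) ∧
          η' '' convexHull ℝ (Set.range fun i => toR (v i)) =
            convexHull ℝ (Set.range fun i => toR (w i)) ∧
          (∃ M' b', ∀ x ∈ convexHull ℝ (Set.range fun i => toR (v i)),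
            affR M' b' (η' x) = x) ∧
          ∀ i, η' (toR (v i)) = toR (w i))) →
        ∀ x ∈ convexHull ℝ (Set.range fun i => toR (v i)), η' x = η x := by
  obtain ⟨M, b, hvw⟩ := hv.exists_affR_apply_eq hden
  obtain ⟨M', b', hwv⟩ := hw.exists_affR_apply_eq fun i => (hden i).symm
  have hvert : Set.range (fun i => toR (v i)) ⊆ convexHull ℝ (Set.range fun i => toR (v i)) :=
    subset_convexHull ℝ _
  refine ⟨affR M b, ⟨⟨M, b, fun _ _ => rfl⟩, ?_, ⟨M', b', ?_⟩, hvw⟩, ?_⟩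
  · rw [← coe_affRAffineMap, AffineMap.image_convexHull, ← Set.range_comp]
    simp only [Function.comp_def, coe_affRAffineMap, hvw]
  · refine AffineMap.eqOn_convexHull
      (f := (affRAffineMap M' b').comp (affRAffineMap M b)) (g := AffineMap.id ℝ _) ?_
    rintro _ ⟨i, rfl⟩
    simp [hvw, hwv]
  · rintro η' ⟨⟨M₁, b₁, hη'⟩, -, -, hη'v⟩ x hx
    rw [hη' x hx]
    refine AffineMap.eqOn_convexHull (f := affRAffineMap M₁ b₁) (g := affRAffineMap M b) ?_ hx
    rintro _ ⟨i, rfl⟩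
    simp only [coe_affRAffineMap, ← hη' _ (hvert ⟨i, rfl⟩), hη'v, hvw]
end

section
/- Let P ⊆ [0,1]ⁿ be a rational polyhedron, and let f, g ∈ M(P) with f, g ≥ 0. If there exists a finite simplicial complex Δ with rational vertices whose support is P such that both f and g are affine on each simplex of Δ, and if f⁻¹(0) ⊇ g⁻¹(0), then there exists a nonnegative integer m such that f ≤ m·g on P. -/
open scoped BigOperators

/-- `f` belongs to `M([0,1]ⁿ)`: `f` is continuous on the `n`-cube and there are finitely
many affine functions with integer coefficients such that at every point of the cube `f`
agrees with one of them. -/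
def McNFun (n : ℕ) (f : (Fin n → ℝ) → ℝ) : Prop :=
  ContinuousOn f (Set.Icc 0 1) ∧
  ∃ S : Finset ((Fin n → ℤ) × ℤ), ∀ x ∈ Set.Icc (0 : Fin n → ℝ) 1,
    ∃ p ∈ S, f x = (∑ i, (p.1 i : ℝ) * x i) + (p.2 : ℝ)

/-- `f` is affine on the (real) convex hull of the finite set `T` of rational points. -/
def AffOnSimplex {n : ℕ} (f : (Fin n → ℝ) → ℝ) (T : Finset (Fin n → ℚ)) : Prop :=
  ∃ (c : Fin n → ℝ) (d : ℝ), ∀ x ∈ convexHull ℝ (toR '' (T : Set (Fin n → ℚ))),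
    f x = (∑ i, c i * x i) + d

/-! Choose `m` so that `f ≤ m • g` at the finitely many vertices of `Δ`; this is possible because
`g` vanishes at a vertex only where `f` does. On each simplex `f - m • g` is affine, so the
half-space `{f - m • g ≤ 0}` contains the vertices, hence the whole simplex. -/

open Filter Matrix

lemma eventually_le_natCast_mul {a b : ℝ} (hb : 0 ≤ b) (hab : b = 0 → a ≤ 0) :
    ∀ᶠ m : ℕ in atTop, a ≤ m * b := by
  rcases hb.eq_or_lt with hb0 | hbpos
  · subst hb0
    simp only [mul_zero]
    exact .of_forall fun _ => hab rfl
  · exact (tendsto_natCast_atTop_atTop.atTop_mul_const hbpos).eventually_ge_atTop a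

lemma Finset.exists_nat_forall_le_mul {ι : Type*} (s : Finset ι) (a b : ι → ℝ)
    (hb : ∀ i ∈ s, 0 ≤ b i) (hab : ∀ i ∈ s, b i = 0 → a i ≤ 0) :
    ∃ m : ℕ, ∀ i ∈ s, a i ≤ m * b i :=
  (eventually_all_finset s |>.2 fun i hi => eventually_le_natCast_mul (hb i hi) (hab i hi)).exists

namespace AffOnSimplex

variable {n : ℕ} {f g : (Fin n → ℝ) → ℝ} {T : Finset (Fin n → ℚ)}

lemma toR_mem_convexHull {v : Fin n → ℚ} (hv : v ∈ T) :
    toR v ∈ convexHull ℝ (toR '' (T : Set (Fin n → ℚ))) :=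
  subset_convexHull ℝ _ ⟨v, hv, rfl⟩

lemma const_mul (hg : AffOnSimplex g T) (a : ℝ) : AffOnSimplex (fun x => a * g x) T := by
  obtain ⟨c, d, hcd⟩ := hg
  refine ⟨a • c, a * d, fun x hx => ?_⟩
  simp only [hcd x hx, Pi.smul_apply, smul_eq_mul, mul_add, Finset.mul_sum, mul_assoc]

lemma le_of_forall_vertex_le (hf : AffOnSimplex f T) (hg : AffOnSimplex g T)
    (hvert : ∀ v ∈ T, f (toR v) ≤ g (toR v)) :
    ∀ x ∈ convexHull ℝ (toR '' (T : Set (Fin n → ℚ))), f x ≤ g x := by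
  obtain ⟨c, d, hf⟩ := hf
  obtain ⟨c', d', hg⟩ := hg
  have hle_iff : ∀ x ∈ convexHull ℝ (toR '' (T : Set (Fin n → ℚ))),
      f x ≤ g x ↔ (c - c') ⬝ᵥ x ≤ d' - d := by
    intro x hx
    rw [hf x hx, hg x hx, sub_dotProduct, dotProduct, dotProduct]
    constructor <;> intro h <;> linarith
  have hhalf : Convex ℝ {x : Fin n → ℝ | (c - c') ⬝ᵥ x ≤ d' - d} :=
    convex_halfSpace_le (dotProductBilin ℝ ℝ (c - c')).isLinear _
  have hsub : convexHull ℝ (toR '' (T : Set (Fin n → ℚ))) ⊆ {x | (c - c') ⬝ᵥ x ≤ d' - d} := by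
    refine convexHull_min ?_ hhalf
    rintro _ ⟨v, hv, rfl⟩
    exact (hle_iff _ (toR_mem_convexHull hv)).1 (hvert v hv)
  exact fun x hx => (hle_iff x hx).2 (hsub hx)

end AffOnSimplex

theorem exists_mul_dominating_general {n : ℕ} (P : Set (Fin n → ℝ)) (f g : (Fin n → ℝ) → ℝ)
    (Δ : Finset (Finset (Fin n → ℚ)))
    (hP : P = ⋃ T ∈ Δ, convexHull ℝ (toR '' (T : Set (Fin n → ℚ))))
    (hfaff : ∀ T ∈ Δ, AffOnSimplex f T) (hgaff : ∀ T ∈ Δ, AffOnSimplex g T)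
    (hg0 : ∀ x ∈ P, 0 ≤ g x)
    (hz : ∀ x ∈ P, g x = 0 → f x = 0) :
    ∃ m : ℕ, ∀ x ∈ P, f x ≤ (m : ℝ) * g x := by
  have hvertex_mem : ∀ v ∈ Δ.biUnion id, toR v ∈ P := by
    intro v hv
    obtain ⟨T, hT, hvT⟩ := Finset.mem_biUnion.1 hv
    exact hP ▸ Set.mem_biUnion hT (AffOnSimplex.toR_mem_convexHull hvT)
  obtain ⟨m, hm⟩ := (Δ.biUnion id).exists_nat_forall_le_mul (fun v => f (toR v))
    (fun v => g (toR v)) (fun v hv => hg0 _ (hvertex_mem v hv))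
    (fun v hv h => (hz _ (hvertex_mem v hv) h).le)
  refine ⟨m, fun x hx => ?_⟩
  obtain ⟨T, hT, hxT⟩ := Set.mem_iUnion₂.1 (hP ▸ hx)
  exact (hfaff T hT).le_of_forall_vertex_le ((hgaff T hT).const_mul m)
    (fun v hv => hm v (Finset.mem_biUnion.2 ⟨T, hT, hv⟩)) x hxT

/-- Let `P ⊆ [0,1]ⁿ` be a rational polyhedron, triangulated by a finite rational
simplicial complex `Δ` on each of whose simplexes both `f, g ∈ M(P)` are affine. If
`f, g ≥ 0` on `P` and the zeroset of `g` is contained in the zeroset of `f`, then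
`f ≤ m·g` on `P` for some nonnegative integer `m`. -/
theorem exists_mul_dominating {n : ℕ} (P : Set (Fin n → ℝ)) (f g : (Fin n → ℝ) → ℝ)
    (hPc : P ⊆ Set.Icc 0 1)
    (hf : McNFun n f) (hg : McNFun n g)
    (Δ : Finset (Finset (Fin n → ℚ)))
    (hP : P = ⋃ T ∈ Δ, convexHull ℝ (toR '' (T : Set (Fin n → ℚ))))
    (hfaff : ∀ T ∈ Δ, AffOnSimplex f T) (hgaff : ∀ T ∈ Δ, AffOnSimplex g T)
    (hf0 : ∀ x ∈ P, 0 ≤ f x) (hg0 : ∀ x ∈ P, 0 ≤ g x)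
    (hz : ∀ x ∈ P, g x = 0 → f x = 0) :
    ∃ m : ℕ, ∀ x ∈ P, f x ≤ (m : ℝ) * g x :=
  exists_mul_dominating_general P f g Δ hP hfaff hgaff hg0 hz
end

section
/- Let I be an ℓ-ideal of M(P), where P ⊆ [0,1]ⁿ is a rational polyhedron, and suppose both f and g admit a common rational triangulation of P on which they are affine. Then for every f ∈ M(P): f ∈ I if and only if there exists g ∈ I with f⁻¹(0) ⊇ g⁻¹(0). -/
open scoped BigOperators

/-- Rational polyhedra: finite unions of convex hulls of finite sets of rational points. -/
def IsRatPoly {n : ℕ} (P : Set (Fin n → ℝ)) : Prop :=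
  ∃ F : Finset (Finset (Fin n → ℚ)),
    P = ⋃ T ∈ F, convexHull ℝ (toR '' (T : Set (Fin n → ℚ)))

/-- `f` belongs to `M(P)`: `f` is continuous on `P` and at every point of `P` it agrees
with one of finitely many affine functions with integer coefficients (i.e. `f` is the
restriction to `P` of a function of `M([0,1]ⁿ)`). -/
def McNP {n : ℕ} (P : Set (Fin n → ℝ)) (f : (Fin n → ℝ) → ℝ) : Prop :=
  ContinuousOn f P ∧
  ∃ S : Finset ((Fin n → ℤ) × ℤ), ∀ x ∈ P,
    ∃ p ∈ S, f x = (∑ i, (p.1 i : ℝ) * x i) + (p.2 : ℝ)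

/-!
Take a triangulation `Δ` of `P` on which both `f` and `|g|` are affine. At each of the finitely
many vertices, `g = 0` forces `f = 0`, so `|f| ≤ K |g|` at all vertices for one integer `K`. On a
simplex `|f| - K |g|` is convex, hence bounded by its values at the vertices, so `|f| ≤ |K • g|`
on all of `P`, and `K • g ∈ I` puts `f` in `I`.
-/

lemma McNP.abs {n : ℕ} {P : Set (Fin n → ℝ)} {g : (Fin n → ℝ) → ℝ}
    (hg : McNP P g) : McNP P fun x => |g x| := by
  classical
  obtain ⟨hc, S, hS⟩ := hg
  refine ⟨hc.abs, S ∪ S.image (fun p => (-p.1, -p.2)), fun x hx => ?_⟩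
  obtain ⟨p, hp, he⟩ := hS x hx
  rcases le_or_gt 0 (g x) with h | h
  · exact ⟨p, Finset.mem_union_left _ hp, by dsimp only; rw [abs_of_nonneg h, he]⟩
  · refine ⟨(-p.1, -p.2), Finset.mem_union_right _ (Finset.mem_image_of_mem _ hp), ?_⟩
    dsimp only
    rw [abs_of_neg h, he]
    simp only [Pi.neg_apply, Int.cast_neg, neg_mul, Finset.sum_neg_distrib, neg_add]

section AffOnSimplex

variable {n : ℕ} {f g : (Fin n → ℝ) → ℝ} {T : Finset (Fin n → ℚ)}

lemma AffOnSimplex.exists_linearMap (hf : AffOnSimplex f T) :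
    ∃ (L : (Fin n → ℝ) →ₗ[ℝ] ℝ) (d : ℝ),
      ∀ x ∈ convexHull ℝ (toR '' (T : Set (Fin n → ℚ))), f x = L x + d := by
  obtain ⟨c, d, hcd⟩ := hf
  exact ⟨∑ i, c i • LinearMap.proj i, d, fun x hx => by simp [hcd x hx]⟩

lemma AffOnSimplex.convexOn (hf : AffOnSimplex f T) :
    ConvexOn ℝ (convexHull ℝ (toR '' (T : Set (Fin n → ℚ)))) f := by
  obtain ⟨L, d, hLd⟩ := hf.exists_linearMap
  exact ((L.convexOn (convex_convexHull ℝ _)).add_const d).congr fun x hx => (hLd x hx).symm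

lemma AffOnSimplex.concaveOn (hf : AffOnSimplex f T) :
    ConcaveOn ℝ (convexHull ℝ (toR '' (T : Set (Fin n → ℚ)))) f := by
  obtain ⟨L, d, hLd⟩ := hf.exists_linearMap
  exact ((L.concaveOn (convex_convexHull ℝ _)).add_const d).congr fun x hx => (hLd x hx).symm

lemma AffOnSimplex.abs_le_mul (hf : AffOnSimplex f T) (hg : AffOnSimplex g T) {K : ℝ}
    (hK : 0 ≤ K) (hT : ∀ q ∈ T, |f (toR q)| ≤ K * g (toR q)) :
    ∀ x ∈ convexHull ℝ (toR '' (T : Set (Fin n → ℚ))), |f x| ≤ K * g x := by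
  intro x hx
  have hconv : ConvexOn ℝ (convexHull ℝ (toR '' (T : Set (Fin n → ℚ))))
      (fun x => |f x| - K * g x) :=
    (hf.convexOn.sup (neg_convexOn_iff.2 hf.concaveOn)).sub (hg.concaveOn.smul hK)
  obtain ⟨_, ⟨q, hq, rfl⟩, hxq⟩ := hconv.exists_ge_of_mem_convexHull (subset_convexHull ℝ _) hx
  linarith [hT q hq]

end AffOnSimplex

lemma Finset.exists_nat_abs_le_mul_abs {α : Type*} (s : Finset α) {f g : α → ℝ}
    (hfg : ∀ y ∈ s, g y = 0 → f y = 0) : ∃ K : ℕ, ∀ y ∈ s, |f y| ≤ K * |g y| := by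
  suffices ∀ᶠ K : ℕ in Filter.atTop, ∀ y ∈ s, |f y| ≤ K * |g y| from this.exists
  refine (Filter.eventually_all_finset s).2 fun y hy => ?_
  rcases eq_or_ne (g y) 0 with h0 | h0
  · simp [hfg y hy h0, h0]
  · filter_upwards [Filter.eventually_ge_atTop ⌈|f y| / |g y|⌉₊] with K hK
    rw [← div_le_iff₀ (abs_pos.2 h0)]
    exact (Nat.le_ceil _).trans (by exact_mod_cast hK)

theorem mem_ideal_iff_zeroset_general {n : ℕ} (P : Set (Fin n → ℝ))
    (I : Set ((Fin n → ℝ) → ℝ))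
    (hIsub : ∀ f ∈ I, McNP P f)
    (hI0 : (0 : (Fin n → ℝ) → ℝ) ∈ I)
    (hIadd : ∀ f ∈ I, ∀ g ∈ I, f + g ∈ I)
    (hIconv : ∀ f g, McNP P f → g ∈ I → (∀ x ∈ P, |f x| ≤ |g x|) → f ∈ I)
    (htri : ∀ f g, McNP P f → McNP P g →
      ∃ Δ : Finset (Finset (Fin n → ℚ)),
        P = (⋃ T ∈ Δ, convexHull ℝ (toR '' (T : Set (Fin n → ℚ)))) ∧
        (∀ T ∈ Δ, AffOnSimplex f T) ∧ (∀ T ∈ Δ, AffOnSimplex g T)) :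
    ∀ f, McNP P f → (f ∈ I ↔ ∃ g ∈ I, ∀ x ∈ P, g x = 0 → f x = 0) := by
  intro f hf
  refine ⟨fun hfI => ⟨f, hfI, fun _ _ => id⟩, ?_⟩
  rintro ⟨g, hgI, hzero⟩
  obtain ⟨Δ, hP, hfΔ, hgΔ⟩ := htri f (fun x => |g x|) hf (hIsub g hgI).abs
  have hvert : ∀ T ∈ Δ, ∀ q ∈ T, toR q ∈ P := fun T hT q hq =>
    hP ▸ Set.mem_biUnion hT (subset_convexHull ℝ _ ⟨q, hq, rfl⟩)
  classical
  obtain ⟨K, hK⟩ := (Δ.biUnion id).exists_nat_abs_le_mul_abs (f := f ∘ toR) (g := g ∘ toR)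
    fun q hq hgq => by
      obtain ⟨T, hT, hqT⟩ := Finset.mem_biUnion.1 hq
      exact hzero _ (hvert T hT q hqT) hgq
  let J : AddSubmonoid ((Fin n → ℝ) → ℝ) :=
    { carrier := I, add_mem' := fun ha hb => hIadd _ ha _ hb, zero_mem' := hI0 }
  refine hIconv f (K • g) hf (J.nsmul_mem hgI K) fun x hx => ?_
  obtain ⟨T, hT, hxT⟩ := Set.mem_iUnion₂.1 (hP ▸ hx)
  have hbound := (hfΔ T hT).abs_le_mul (hgΔ T hT) K.cast_nonneg
    (fun q hq => hK q (Finset.mem_biUnion.2 ⟨T, hT, hq⟩)) x hxT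
  simpa [abs_mul] using hbound

/-- Let `I` be an ℓ-ideal of `M(P)` (`P ⊆ [0,1]ⁿ` a rational polyhedron), and suppose any
two elements of `M(P)` admit a common rational triangulation of `P` on which both are
affine. Then for every `f ∈ M(P)`: `f ∈ I` iff the zeroset of `f` contains the zeroset of
some `g ∈ I`. -/
theorem mem_ideal_iff_zeroset {n : ℕ} (P : Set (Fin n → ℝ))
    (hP : IsRatPoly P) (hPc : P ⊆ Set.Icc 0 1)
    (I : Set ((Fin n → ℝ) → ℝ))
    (hIsub : ∀ f ∈ I, McNP P f)
    (hI0 : (0 : (Fin n → ℝ) → ℝ) ∈ I)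
    (hIadd : ∀ f ∈ I, ∀ g ∈ I, f + g ∈ I)
    (hIneg : ∀ f ∈ I, -f ∈ I)
    (hIconv : ∀ f g, McNP P f → g ∈ I → (∀ x ∈ P, |f x| ≤ |g x|) → f ∈ I)
    (htri : ∀ f g, McNP P f → McNP P g →
      ∃ Δ : Finset (Finset (Fin n → ℚ)),
        P = (⋃ T ∈ Δ, convexHull ℝ (toR '' (T : Set (Fin n → ℚ)))) ∧
        (∀ T ∈ Δ, AffOnSimplex f T) ∧ (∀ T ∈ Δ, AffOnSimplex g T)) :
    ∀ f, McNP P f → (f ∈ I ↔ ∃ g ∈ I, ∀ x ∈ P, g x = 0 → f x = 0) :=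
  mem_ideal_iff_zeroset_general P I hIsub hI0 hIadd hIconv htri
end

section
/- Let 𝒫 and 𝒬 be nonempty filtering families of rational polyhedra in [0,1]ⁿ. If ⟨𝒫⟩ = ⟨𝒬⟩ then 𝒫 and 𝒬 are confluent, i.e., each minorizes the other: for every A ∈ 𝒬 there is B ∈ 𝒫 with B ⊆ A, and for every A ∈ 𝒫 there is B ∈ 𝒬 with B ⊆ A. Conversely, confluence implies ⟨𝒫⟩ = ⟨𝒬⟩. -/
open scoped BigOperators

/-- The ideal `⟨𝒫⟩` attached to a family of rational polyhedra: the functions of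
`M([0,1]ⁿ)` whose zeroset contains some member of the family. -/
def idealOf (n : ℕ) (Ps : Set (Set (Fin n → ℝ))) : Set ((Fin n → ℝ) → ℝ) :=
  {f | McNFun n f ∧ ∃ Q ∈ Ps, ∀ x ∈ Q, f x = 0}

/-- `Ps` minorizes `Qs`: every member of `Qs` contains a member of `Ps`. -/
def Minorizes {n : ℕ} (Ps Qs : Set (Set (Fin n → ℝ))) : Prop :=
  ∀ A ∈ Qs, ∃ B ∈ Ps, B ⊆ A

/-!
If `⟨𝒫⟩ = ⟨𝒬⟩` and `A ∈ 𝒬`, a function of `M([0,1]ⁿ)` whose zero set is exactly `A` lies in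
`⟨𝒬⟩ = ⟨𝒫⟩`, so it vanishes on some `B ∈ 𝒫`, whence `B ⊆ A`; the converse is immediate.

Such a function exists for every rational polyhedron. The convex hull of finitely many rational
points is the projection of a rational polyhedron in the coordinates `(x, w)`, `w` barycentric,
so by Fourier–Motzkin elimination it is an intersection of rational half-spaces `a ⬝ x ≤ b`.
After clearing denominators, `max 0 (d * (a ⬝ x - b))` vanishes exactly on such a half-space,
and sums and minima of these nonnegative functions cut out intersections and unions.
-/

theorem Finset.exists_between_of_forall_le {α : Type*} [LinearOrder α] [Nonempty α]
    {s t : Finset α} (h : ∀ a ∈ s, ∀ b ∈ t, a ≤ b) :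
    ∃ c, (∀ a ∈ s, a ≤ c) ∧ ∀ b ∈ t, c ≤ b := by
  rcases s.eq_empty_or_nonempty with rfl | hs
  · rcases t.eq_empty_or_nonempty with rfl | ht
    · exact ⟨Classical.arbitrary α, by simp⟩
    · exact ⟨t.min' ht, by simp, fun b hb => t.min'_le b hb⟩
  · exact ⟨s.max' hs, fun a ha => s.le_max' a ha, fun b hb => h _ (s.max'_mem hs) b hb⟩

theorem exists_forall_mul_le_iff {ι K : Type*} [Field K] [LinearOrder K] [IsStrictOrderedRing K]
    (s : Finset ι) (c r : ι → K) :
    (∃ t, ∀ i ∈ s, c i * t ≤ r i) ↔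
      (∀ i ∈ s, c i = 0 → 0 ≤ r i) ∧
        ∀ i ∈ s, 0 < c i → ∀ j ∈ s, c j < 0 → c j * r i ≤ c i * r j := by
  constructor
  · rintro ⟨t, ht⟩
    refine ⟨fun i hi hci => by simpa [hci] using ht i hi, fun i hi hci j hj hcj => ?_⟩
    nlinarith [ht i hi, ht j hj]
  · rintro ⟨hzero, hpair⟩
    obtain ⟨t, hlower, hupper⟩ := Finset.exists_between_of_forall_le
        (s := (s.filter (c · < 0)).image fun j => r j / c j)
        (t := (s.filter (0 < c ·)).image fun i => r i / c i) (by
      simp only [Finset.forall_mem_image, Finset.mem_filter]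
      rintro j ⟨hj, hcj⟩ i ⟨hi, hci⟩
      rw [div_le_iff_of_neg hcj, div_mul_eq_mul_div, div_le_iff₀ hci]
      linarith [hpair i hi hci j hj hcj])
    refine ⟨t, fun i hi => ?_⟩
    rcases lt_trichotomy (c i) 0 with hci | hci | hci
    · have := hlower _ (Finset.mem_image_of_mem _ (Finset.mem_filter.2 ⟨hi, hci⟩))
      rw [div_le_iff_of_neg hci] at this
      linarith
    · simpa [hci] using hzero i hi hci
    · have := hupper _ (Finset.mem_image_of_mem _ (Finset.mem_filter.2 ⟨hi, hci⟩))
      rw [le_div_iff₀ hci] at this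
      linarith

theorem Fin.mem_image_init_iff {m : ℕ} {α : Type*} {P : Set (Fin (m + 1) → α)}
    {y : Fin m → α} : y ∈ Fin.init '' P ↔ ∃ t, Fin.snoc y t ∈ P := by
  constructor
  · rintro ⟨x, hx, rfl⟩
    exact ⟨x (Fin.last m), by rwa [Fin.snoc_init_self]⟩
  · rintro ⟨t, ht⟩
    exact ⟨_, ht, Fin.init_snoc _ _⟩

theorem Fin.sum_mul_snoc {m : ℕ} (a : Fin (m + 1) → ℚ) (y : Fin m → ℝ) (t : ℝ) :
    ∑ i, (a i : ℝ) * Fin.snoc (α := fun _ => ℝ) y t i =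
      ∑ i, (Fin.init a i : ℝ) * y i + a (Fin.last m) * t := by
  simp [Fin.sum_univ_castSucc, Fin.init]

def IsRatHPolyhedron {m : ℕ} (P : Set (Fin m → ℝ)) : Prop :=
  ∃ L : Finset ((Fin m → ℚ) × ℚ), P = {x | ∀ p ∈ L, ∑ i, (p.1 i : ℝ) * x i ≤ p.2}

section IsRatHPolyhedron

variable {m : ℕ}

theorem isRatHPolyhedron_setOf_le (a : Fin m → ℚ) (b : ℚ) :
    IsRatHPolyhedron {x : Fin m → ℝ | ∑ i, (a i : ℝ) * x i ≤ b} :=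
  ⟨{(a, b)}, by simp⟩

theorem IsRatHPolyhedron.inter {P P' : Set (Fin m → ℝ)} (hP : IsRatHPolyhedron P)
    (hP' : IsRatHPolyhedron P') : IsRatHPolyhedron (P ∩ P') := by
  obtain ⟨L, rfl⟩ := hP
  obtain ⟨L', rfl⟩ := hP'
  exact ⟨L ∪ L', by
    ext; simp only [Set.mem_inter_iff, Set.mem_ofPred_eq, Finset.forall_mem_union]⟩

theorem isRatHPolyhedron_iInter {ι : Type*} [Fintype ι] {P : ι → Set (Fin m → ℝ)}
    (hP : ∀ i, IsRatHPolyhedron (P i)) : IsRatHPolyhedron (⋂ i, P i) := by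
  choose L hL using hP
  refine ⟨Finset.univ.biUnion L, ?_⟩
  ext
  simp only [hL, Set.mem_iInter, Set.mem_ofPred_eq, Finset.mem_biUnion, Finset.mem_univ,
    true_and, forall_exists_index]
  exact forall_comm

theorem isRatHPolyhedron_setOf_eq (a : Fin m → ℚ) (b : ℚ) :
    IsRatHPolyhedron {x : Fin m → ℝ | ∑ i, (a i : ℝ) * x i = b} := by
  convert (isRatHPolyhedron_setOf_le a b).inter (isRatHPolyhedron_setOf_le (-a) (-b)) using 1
  ext x
  simp [le_antisymm_iff]

/-- Fourier–Motzkin elimination of the last coordinate: keep the constraints not involving it,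
and add the combination of each constraint with positive last coefficient with each one with
negative last coefficient that cancels it. -/
theorem IsRatHPolyhedron.image_init {P : Set (Fin (m + 1) → ℝ)} (hP : IsRatHPolyhedron P) :
    IsRatHPolyhedron (Fin.init '' P) := by
  obtain ⟨L, rfl⟩ := hP
  let c : (Fin (m + 1) → ℚ) × ℚ → ℚ := fun p => p.1 (Fin.last m)
  let red : (Fin (m + 1) → ℚ) × ℚ → (Fin m → ℚ) × ℚ := fun p => (Fin.init p.1, p.2)
  let comb : (Fin (m + 1) → ℚ) × ℚ → (Fin (m + 1) → ℚ) × ℚ → (Fin m → ℚ) × ℚ :=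
    fun p q => (c p • Fin.init q.1 - c q • Fin.init p.1, c p * q.2 - c q * p.2)
  refine ⟨(L.filter (c · = 0)).image red ∪
    Finset.image₂ comb (L.filter (0 < c ·)) (L.filter (c · < 0)), ?_⟩
  ext y
  let r : (Fin (m + 1) → ℚ) × ℚ → ℝ := fun p => p.2 - ∑ i, (Fin.init p.1 i : ℝ) * y i
  have hsnoc (t : ℝ) : (∀ p ∈ L, ∑ i, (p.1 i : ℝ) * Fin.snoc (α := fun _ => ℝ) y t i ≤ p.2) ↔
      ∀ p ∈ L, (c p : ℝ) * t ≤ r p := by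
    refine forall₂_congr fun p _ => ?_
    rw [Fin.sum_mul_snoc]
    constructor <;> intro h <;> linarith
  have hred (p) : (∑ i, ((red p).1 i : ℝ) * y i ≤ (red p).2) ↔ 0 ≤ r p := sub_nonneg.symm
  have hcomb (p q) : (∑ i, ((comb p q).1 i : ℝ) * y i ≤ (comb p q).2) ↔
      (c q : ℝ) * r p ≤ c p * r q := by
    simp only [comb, r, Pi.sub_apply, Pi.smul_apply, smul_eq_mul, Rat.cast_sub, Rat.cast_mul,
      sub_mul, Finset.sum_sub_distrib, mul_assoc, ← Finset.mul_sum]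
    constructor <;> intro h <;> linarith
  simp only [Fin.mem_image_init_iff, Set.mem_ofPred_eq, hsnoc, exists_forall_mul_le_iff,
    Finset.forall_mem_union, Finset.forall_mem_image, Finset.forall_mem_image₂,
    Finset.mem_filter, hred, hcomb, Rat.cast_eq_zero, Rat.cast_pos, Rat.cast_lt_zero, and_imp]

theorem IsRatHPolyhedron.image_castAdd :
    ∀ {k : ℕ} {P : Set (Fin (m + k) → ℝ)}, IsRatHPolyhedron P →
      IsRatHPolyhedron ((fun x i => x (Fin.castAdd k i)) '' P)
  | 0, P, hP => by simpa using hP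
  | k + 1, P, hP => by
    have h := hP.image_init.image_castAdd (k := k)
    rw [Set.image_image] at h
    exact h

end IsRatHPolyhedron

theorem convexHull_range_eq_image_stdSimplex {R E ι : Type*} [Field R] [LinearOrder R]
    [IsStrictOrderedRing R] [AddCommGroup E] [Module R E] [Fintype ι] (v : ι → E) :
    convexHull R (Set.range v) = (fun w => ∑ i, w i • v i) '' stdSimplex R ι := by
  classical
  have h := (Fintype.linearCombination R v).image_convexHull (Set.range fun i => Pi.single i 1)
  rw [← Set.range_comp] at h
  simp only [Function.comp_def, Fintype.linearCombination_apply_single, one_smul] at h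
  rw [← convexHull_rangle_single_eq_stdSimplex, ← h]
  rfl

theorem isRatHPolyhedron_setOf_barycentric {n k : ℕ} (v : Fin k → Fin n → ℚ) :
    IsRatHPolyhedron {u : Fin (n + k) → ℝ | (∀ i, 0 ≤ u (Fin.natAdd n i)) ∧
      ∑ i, u (Fin.natAdd n i) = 1 ∧
      ∀ j, u (Fin.castAdd k j) = ∑ i, u (Fin.natAdd n i) * v i j} := by
  convert ((isRatHPolyhedron_iInter fun i => isRatHPolyhedron_setOf_le
      (Fin.append 0 (-Pi.single i 1) : Fin (n + k) → ℚ) 0).inter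
    (isRatHPolyhedron_setOf_eq (Fin.append 0 1 : Fin (n + k) → ℚ) 1)).inter
    (isRatHPolyhedron_iInter fun j => isRatHPolyhedron_setOf_eq
      (Fin.append (Pi.single j 1) fun i => -v i j : Fin (n + k) → ℚ) 0) using 1
  ext u
  simp [Fin.sum_univ_add, Pi.single_apply, apply_ite (Rat.cast : ℚ → ℝ), add_neg_eq_zero,
    and_assoc, mul_comm]

theorem isRatHPolyhedron_convexHull_range {n k : ℕ} (v : Fin k → Fin n → ℚ) :
    IsRatHPolyhedron (convexHull ℝ (Set.range fun i => toR (v i))) := by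
  convert (isRatHPolyhedron_setOf_barycentric v).image_castAdd using 1
  rw [convexHull_range_eq_image_stdSimplex]
  ext x
  constructor
  · rintro ⟨w, ⟨hw0, hw1⟩, rfl⟩
    refine ⟨Fin.append (∑ i, w i • toR (v i)) w,
      ⟨by simpa using hw0, by simpa using hw1, fun j => by simp [toR]⟩, by ext; simp⟩
  · rintro ⟨u, ⟨h0, h1, hj⟩, rfl⟩
    refine ⟨fun i => u (Fin.natAdd n i), ⟨h0, h1⟩, ?_⟩
    ext j
    simp [toR, hj]

theorem isRatHPolyhedron_convexHull {n : ℕ} (S : Finset (Fin n → ℚ)) :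
    IsRatHPolyhedron (convexHull ℝ (toR '' (S : Set (Fin n → ℚ)))) := by
  have hS : (Set.range fun i => toR (S.equivFin.symm i : Fin n → ℚ)) = toR '' S := by
    rw [Set.range_comp' toR, Set.range_comp' Subtype.val, Equiv.range_eq_univ, Set.image_univ,
      Subtype.range_coe]
  rw [← hS]
  exact isRatHPolyhedron_convexHull_range _

theorem Rat.exists_int_mul_eq_of_den_dvd {q : ℚ} {D : ℕ} (h : q.den ∣ D) :
    ∃ z : ℤ, (z : ℚ) = D * q := by
  obtain ⟨e, rfl⟩ := h
  exact ⟨e * q.num, by push_cast; rw [← Rat.den_mul_eq_num]; ring⟩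

theorem exists_int_affine_eq_pos_mul {n : ℕ} (a : Fin n → ℚ) (b : ℚ) :
    ∃ (A : Fin n → ℤ) (B : ℤ) (D : ℝ), 0 < D ∧
      ∀ x : Fin n → ℝ, ∑ i, (A i : ℝ) * x i + B = D * (∑ i, (a i : ℝ) * x i - b) := by
  let D : ℕ := b.den * ∏ i, (a i).den
  have hA (i) : ∃ z : ℤ, (z : ℚ) = D * a i := Rat.exists_int_mul_eq_of_den_dvd
    (dvd_mul_of_dvd_right (Finset.dvd_prod_of_mem _ (Finset.mem_univ i)) _)
  choose A hA using hA
  obtain ⟨B, hB⟩ := Rat.exists_int_mul_eq_of_den_dvd (dvd_mul_right b.den (∏ i, (a i).den))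
  have hAR (i) : (A i : ℝ) = D * (a i : ℝ) := by
    exact_mod_cast congrArg (Rat.cast : ℚ → ℝ) (hA i)
  have hBR : (B : ℝ) = D * (b : ℝ) := by exact_mod_cast congrArg (Rat.cast : ℚ → ℝ) hB
  refine ⟨A, -B, D, by positivity, fun x => ?_⟩
  simp only [hAR, Int.cast_neg, hBR, mul_sub, Finset.mul_sum, mul_assoc]
  ring

theorem mcNFun_affine {n : ℕ} (a : Fin n → ℤ) (b : ℤ) :
    McNFun n fun x => ∑ i, (a i : ℝ) * x i + b :=
  ⟨by fun_prop, {(a, b)}, fun _ _ => ⟨(a, b), Finset.mem_singleton_self _, rfl⟩⟩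

theorem mcNFun_const {n : ℕ} (b : ℤ) : McNFun n fun _ => b := by
  simpa using mcNFun_affine (0 : Fin n → ℤ) b

namespace McNFun

variable {n : ℕ} {f g : (Fin n → ℝ) → ℝ}

theorem add (hf : McNFun n f) (hg : McNFun n g) : McNFun n (f + g) := by
  obtain ⟨hfc, S, hS⟩ := hf
  obtain ⟨hgc, T, hT⟩ := hg
  refine ⟨hfc.add hgc, Finset.image₂ (· + ·) S T, fun x hx => ?_⟩
  obtain ⟨p, hp, hfx⟩ := hS x hx
  obtain ⟨q, hq, hgx⟩ := hT x hx
  refine ⟨p + q, Finset.mem_image₂_of_mem hp hq, ?_⟩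
  simp only [Pi.add_apply, hfx, hgx, Prod.fst_add, Prod.snd_add, Int.cast_add, add_mul,
    Finset.sum_add_distrib]
  ring

theorem sup (hf : McNFun n f) (hg : McNFun n g) : McNFun n (f ⊔ g) := by
  obtain ⟨hfc, S, hS⟩ := hf
  obtain ⟨hgc, T, hT⟩ := hg
  refine ⟨hfc.sup hgc, S ∪ T, fun x hx => ?_⟩
  rcases max_choice (f x) (g x) with h | h
  · obtain ⟨p, hp, hfx⟩ := hS x hx
    exact ⟨p, Finset.mem_union_left _ hp, by rw [Pi.sup_apply, h, hfx]⟩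
  · obtain ⟨p, hp, hgx⟩ := hT x hx
    exact ⟨p, Finset.mem_union_right _ hp, by rw [Pi.sup_apply, h, hgx]⟩

theorem inf (hf : McNFun n f) (hg : McNFun n g) : McNFun n (f ⊓ g) := by
  obtain ⟨hfc, S, hS⟩ := hf
  obtain ⟨hgc, T, hT⟩ := hg
  refine ⟨hfc.inf hgc, S ∪ T, fun x hx => ?_⟩
  rcases min_choice (f x) (g x) with h | h
  · obtain ⟨p, hp, hfx⟩ := hS x hx
    exact ⟨p, Finset.mem_union_left _ hp, by rw [Pi.inf_apply, h, hfx]⟩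
  · obtain ⟨p, hp, hgx⟩ := hT x hx
    exact ⟨p, Finset.mem_union_right _ hp, by rw [Pi.inf_apply, h, hgx]⟩

end McNFun

/-- Nonnegativity is what makes `f ⊓ g` and `f + g` cut out unions and intersections. -/
def IsMcNZeroSet (n : ℕ) (A : Set (Fin n → ℝ)) : Prop :=
  ∃ f, McNFun n f ∧ 0 ≤ f ∧ {x | f x = 0} = A

namespace IsMcNZeroSet

variable {n : ℕ} {A B : Set (Fin n → ℝ)}

theorem univ : IsMcNZeroSet n Set.univ :=
  ⟨fun _ => ((0 : ℤ) : ℝ), mcNFun_const 0, fun _ => by simp, by simp⟩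

theorem empty : IsMcNZeroSet n ∅ :=
  ⟨fun _ => ((1 : ℤ) : ℝ), mcNFun_const 1, fun _ => by simp, by simp⟩

theorem inter (hA : IsMcNZeroSet n A) (hB : IsMcNZeroSet n B) : IsMcNZeroSet n (A ∩ B) := by
  obtain ⟨f, hf, hf0, rfl⟩ := hA
  obtain ⟨g, hg, hg0, rfl⟩ := hB
  refine ⟨f + g, hf.add hg, add_nonneg hf0 hg0, ?_⟩
  ext x
  exact add_eq_zero_iff_of_nonneg (hf0 x) (hg0 x)

theorem union (hA : IsMcNZeroSet n A) (hB : IsMcNZeroSet n B) : IsMcNZeroSet n (A ∪ B) := by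
  obtain ⟨f, hf, hf0, rfl⟩ := hA
  obtain ⟨g, hg, hg0, rfl⟩ := hB
  refine ⟨f ⊓ g, hf.inf hg, le_inf hf0 hg0, ?_⟩
  ext x
  simp only [Set.mem_ofPred_eq, Set.mem_union, Pi.inf_apply]
  constructor
  · intro h
    rcases min_choice (f x) (g x) with h' | h' <;> rw [h'] at h <;> simp [h]
  · rintro (h | h)
    · exact le_antisymm ((min_le_left _ _).trans h.le) (le_min (hf0 x) (hg0 x))
    · exact le_antisymm ((min_le_right _ _).trans h.le) (le_min (hf0 x) (hg0 x))

theorem biInter {ι : Type*} (s : Finset ι) {A : ι → Set (Fin n → ℝ)}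
    (hA : ∀ i ∈ s, IsMcNZeroSet n (A i)) : IsMcNZeroSet n (⋂ i ∈ s, A i) := by
  classical
  induction s using Finset.induction_on with
  | empty => simpa using univ
  | insert i s _ ih =>
    rw [Finset.set_biInter_insert]
    exact (hA i (s.mem_insert_self i)).inter (ih fun j hj => hA j (Finset.mem_insert_of_mem hj))

theorem biUnion {ι : Type*} (s : Finset ι) {A : ι → Set (Fin n → ℝ)}
    (hA : ∀ i ∈ s, IsMcNZeroSet n (A i)) : IsMcNZeroSet n (⋃ i ∈ s, A i) := by
  classical
  induction s using Finset.induction_on with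
  | empty => simpa using empty
  | insert i s _ ih =>
    rw [Finset.set_biUnion_insert]
    exact (hA i (s.mem_insert_self i)).union (ih fun j hj => hA j (Finset.mem_insert_of_mem hj))

end IsMcNZeroSet

theorem isMcNZeroSet_setOf_le {n : ℕ} (a : Fin n → ℚ) (b : ℚ) :
    IsMcNZeroSet n {x | ∑ i, (a i : ℝ) * x i ≤ b} := by
  obtain ⟨A, B, D, hD, hAB⟩ := exists_int_affine_eq_pos_mul a b
  refine ⟨_ ⊔ fun _ => ((0 : ℤ) : ℝ), (mcNFun_affine A B).sup (mcNFun_const 0),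
    fun x => by simp, ?_⟩
  ext x
  simp only [Set.mem_ofPred_eq, Pi.sup_apply, hAB, Int.cast_zero, max_eq_right_iff]
  rw [← mul_zero D, mul_le_mul_iff_right₀ hD, sub_nonpos]

theorem IsRatHPolyhedron.isMcNZeroSet {n : ℕ} {P : Set (Fin n → ℝ)} (hP : IsRatHPolyhedron P) :
    IsMcNZeroSet n P := by
  obtain ⟨L, rfl⟩ := hP
  convert IsMcNZeroSet.biInter L fun p _ => isMcNZeroSet_setOf_le p.1 p.2
  ext x
  simp

theorem IsRatPoly.isMcNZeroSet {n : ℕ} {A : Set (Fin n → ℝ)} (hA : IsRatPoly A) :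
    IsMcNZeroSet n A := by
  obtain ⟨F, rfl⟩ := hA
  exact IsMcNZeroSet.biUnion F fun T _ => (isRatHPolyhedron_convexHull T).isMcNZeroSet

theorem idealOf_subset_of_minorizes {n : ℕ} {Ps Qs : Set (Set (Fin n → ℝ))}
    (h : Minorizes Ps Qs) : idealOf n Qs ⊆ idealOf n Ps := by
  rintro f ⟨hf, A, hA, hfA⟩
  obtain ⟨B, hB, hBA⟩ := h A hA
  exact ⟨hf, B, hB, fun x hx => hfA x (hBA hx)⟩

theorem minorizes_of_idealOf_subset {n : ℕ} {Ps Qs : Set (Set (Fin n → ℝ))}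
    (hQs : ∀ A ∈ Qs, IsMcNZeroSet n A) (h : idealOf n Qs ⊆ idealOf n Ps) :
    Minorizes Ps Qs := by
  intro A hA
  obtain ⟨f, hf, -, rfl⟩ := hQs A hA
  obtain ⟨-, B, hB, hfB⟩ := h ⟨hf, _, hA, fun x hx => hx⟩
  exact ⟨B, hB, hfB⟩

theorem idealOf_eq_iff_confluent_general {n : ℕ} (Ps Qs : Set (Set (Fin n → ℝ)))
    (hPpoly : ∀ Q ∈ Ps, IsRatPoly Q ∧ Q ⊆ Set.Icc 0 1)
    (hQpoly : ∀ Q ∈ Qs, IsRatPoly Q ∧ Q ⊆ Set.Icc 0 1) :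
    idealOf n Ps = idealOf n Qs ↔ (Minorizes Ps Qs ∧ Minorizes Qs Ps) := by
  have hPs : ∀ A ∈ Ps, IsMcNZeroSet n A := fun A hA => (hPpoly A hA).1.isMcNZeroSet
  have hQs : ∀ A ∈ Qs, IsMcNZeroSet n A := fun A hA => (hQpoly A hA).1.isMcNZeroSet
  rw [Set.Subset.antisymm_iff]
  exact ⟨fun h => ⟨minorizes_of_idealOf_subset hQs h.2, minorizes_of_idealOf_subset hPs h.1⟩,
    fun h => ⟨idealOf_subset_of_minorizes h.2, idealOf_subset_of_minorizes h.1⟩⟩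

/-- For nonempty filtering families `𝒫, 𝒬` of rational polyhedra in `[0,1]ⁿ`:
`⟨𝒫⟩ = ⟨𝒬⟩` if and only if `𝒫` and `𝒬` are confluent (each minorizes the other). -/
theorem idealOf_eq_iff_confluent {n : ℕ} (Ps Qs : Set (Set (Fin n → ℝ)))
    (hPne : Ps.Nonempty) (hQne : Qs.Nonempty)
    (hPpoly : ∀ Q ∈ Ps, IsRatPoly Q ∧ Q ⊆ Set.Icc 0 1)
    (hQpoly : ∀ Q ∈ Qs, IsRatPoly Q ∧ Q ⊆ Set.Icc 0 1)
    (hPfil : ∀ X ∈ Ps, ∀ Y ∈ Ps, ∃ Z ∈ Ps, Z ⊆ X ∩ Y)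
    (hQfil : ∀ X ∈ Qs, ∀ Y ∈ Qs, ∃ Z ∈ Qs, Z ⊆ X ∩ Y) :
    idealOf n Ps = idealOf n Qs ↔ (Minorizes Ps Qs ∧ Minorizes Qs Ps) :=
  idealOf_eq_iff_confluent_general Ps Qs hPpoly hQpoly
end
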